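/- arXiv:1806.00789 — 3 statements merged into one kernel-verified Lean document; each statement's English description precedes it below -/
import Mathlib

section
/- Let α=(a_1,...,a_n) and β=(b_1,...,b_n) be sequences of nonnegative reals, V_1 ⊆ {1,...,n}, and φ a bijection of {1,...,n} such that φ(V_1) ∩ V_1 = ∅, a_i ≤ b_i for all i ∉ V_1, and for all i ∈ V_1, a_i + a_{φ(i)} ≤ b_i + b_{φ(i)} and a_i ≤ a_{φ(i)}. Then α is weakly majorized by β, i.e., for every t with 1 ≤ t ≤ n, the sum of the t largest entries of α is at most the sum of the t largest entries of β. -/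
/-- `x` is weakly majorized by `y`: for each `t`, the sum of the `t` largest entries of `x`
is at most the sum of the `t` largest entries of `y`.  Equivalently (for any vectors), every
subset-sum of `x` is dominated by some subset-sum of `y` of the same size. -/
def WeaklyMajorizedBy {n : ℕ} (x y : Fin n → ℝ) : Prop :=
  ∀ s : Finset (Fin n), ∃ t : Finset (Fin n), t.card = s.card ∧ ∑ i ∈ s, x i ≤ ∑ i ∈ t, y i

theorem stmt_0 {n : ℕ} (a b : Fin n → ℝ)
    (ha : ∀ i, 0 ≤ a i) (hb : ∀ i, 0 ≤ b i)
    (V1 : Finset (Fin n)) (φ : Equiv.Perm (Fin n))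
    (hdisj : ∀ i ∈ V1, φ i ∉ V1)
    (hout : ∀ i, i ∉ V1 → a i ≤ b i)
    (hin : ∀ i ∈ V1, a i + a (φ i) ≤ b i + b (φ i) ∧ a i ≤ a (φ i)) :
    WeaklyMajorizedBy a b := by
  classical
  intro s
  set g : Fin n → Fin n :=
    fun i => if i ∈ V1 ∧ φ i ∉ s ∧ b i < b (φ i) then φ i else i with hgdef
  have hinj : Set.InjOn g s := by
    intro i hi j hj hij
    simp only [hgdef] at hij
    by_cases hci : i ∈ V1 ∧ φ i ∉ s ∧ b i < b (φ i) <;>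
      by_cases hcj : j ∈ V1 ∧ φ j ∉ s ∧ b j < b (φ j)
    · rw [if_pos hci, if_pos hcj] at hij; exact φ.injective hij
    · rw [if_pos hci, if_neg hcj] at hij
      exact absurd (hij ▸ hj) hci.2.1
    · rw [if_neg hci, if_pos hcj] at hij
      exact absurd (hij ▸ hi) hcj.2.1
    · rwa [if_neg hci, if_neg hcj] at hij
  refine ⟨s.image g, Finset.card_image_of_injOn hinj, ?_⟩
  rw [Finset.sum_image (fun i hi j hj => hinj hi hj)]
  rw [← sub_nonneg, ← Finset.sum_sub_distrib]
  set c : Fin n → ℝ := fun i => b (g i) - a i with hcdef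
  set P : Finset (Fin n) := s.filter (fun i => i ∈ V1 ∧ φ i ∈ s) with hP
  set Q : Finset (Fin n) := P.image φ with hQ
  have hPV1 : ∀ i ∈ P, i ∈ V1 ∧ φ i ∈ s := fun i hi => (Finset.mem_filter.mp hi).2
  have hPs : P ⊆ s := Finset.filter_subset _ _
  have hQs : Q ⊆ s := by
    intro j hj
    obtain ⟨i, hi, rfl⟩ := Finset.mem_image.mp hj
    exact (hPV1 i hi).2
  have hQV1 : ∀ j ∈ Q, j ∉ V1 := by
    intro j hj
    obtain ⟨i, hi, rfl⟩ := Finset.mem_image.mp hj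
    exact hdisj i (hPV1 i hi).1
  have hPQdisj : Disjoint P Q := by
    refine Finset.disjoint_left.mpr fun i hiP hiQ => hQV1 i hiQ (hPV1 i hiP).1
  have hPQsub : P ∪ Q ⊆ s := Finset.union_subset hPs hQs
  -- g is the identity on P and on Q
  have hgP : ∀ i ∈ P, g i = i := by
    intro i hi
    simp only [hgdef]
    rw [if_neg]
    rintro ⟨-, h2, -⟩; exact h2 (hPV1 i hi).2
  have hgQ : ∀ j ∈ Q, g j = j := by
    intro j hj
    simp only [hgdef]
    rw [if_neg]
    rintro ⟨h1, -, -⟩; exact hQV1 j hj h1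
  have hsplit : ∑ i ∈ s, c i = (∑ i ∈ s \ (P ∪ Q), c i) + ∑ i ∈ P ∪ Q, c i :=
    (Finset.sum_sdiff hPQsub).symm
  rw [hsplit]
  have hRest : 0 ≤ ∑ i ∈ s \ (P ∪ Q), c i := by
    refine Finset.sum_nonneg fun i hi => ?_
    obtain ⟨his, hiPQ⟩ := Finset.mem_sdiff.mp hi
    rw [Finset.mem_union, not_or] at hiPQ
    by_cases hiV : i ∈ V1
    · have hφs : φ i ∉ s := by
        intro h
        exact hiPQ.1 (Finset.mem_filter.mpr ⟨his, hiV, h⟩)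
      obtain ⟨hsum, hle⟩ := hin i hiV
      have h2 : a i + a i ≤ b i + b (φ i) := le_trans (by linarith) hsum
      simp only [hcdef, hgdef]
      by_cases hbb : b i < b (φ i)
      · rw [if_pos ⟨hiV, hφs, hbb⟩]; linarith
      · rw [if_neg (by rintro ⟨-, -, h⟩; exact hbb h)]
        push_neg at hbb; linarith
    · simp only [hcdef, hgdef]
      rw [if_neg (by rintro ⟨h, -, -⟩; exact hiV h)]
      have := hout i hiV
      linarith
  have hPQ : 0 ≤ ∑ i ∈ P ∪ Q, c i := by
    rw [Finset.sum_union hPQdisj]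
    have hQsum : ∑ j ∈ Q, c j = ∑ i ∈ P, c (φ i) :=
      Finset.sum_image (fun i _ j _ h => φ.injective h)
    rw [hQsum, ← Finset.sum_add_distrib]
    refine Finset.sum_nonneg fun i hi => ?_
    obtain ⟨hiV, hφs⟩ := hPV1 i hi
    have h1 : g i = i := hgP i hi
    have h2 : g (φ i) = φ i := hgQ (φ i) (Finset.mem_image_of_mem φ hi)
    have := (hin i hiV).1
    simp only [hcdef, h1, h2]
    linarith
  linarith
end

section
/- Let T be a tree on n ≥ 2 vertices and S_n the star on n vertices. Then for every positive integer k, the vector C(2k;T) = (C_v(2k;T))_{v∈V(T)} of numbers of closed walks of length 2k starting at each vertex is weakly majorized by the corresponding vector C(2k;S_n) for the star; in particular, the total number of closed walks of length 2k in T is at most that in S_n. -/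
/-- The star on `n` vertices: vertex `0` is adjacent to all others. -/
def starGraph (n : ℕ) : SimpleGraph (Fin n) :=
  SimpleGraph.fromRel (fun i _ => (i : ℕ) = 0)

/-!
In a triangle-free graph distinct neighbours of a vertex have disjoint sets of incident edges, so
in a tree `∑_{v ~ u} deg v ≤ n - 1` for every `u`. With Cauchy–Schwarz this gives
`‖A x‖² ≤ (n - 1) ‖x‖²` for the adjacency matrix `A`, and since `(A^{2k})_{vv} = ‖A^k e_v‖²` and
`‖A e_v‖² = deg v`, we get `C_v(2k; T) ≤ (n - 1)^{k-1} deg_T v`. For the star `A³ = (n - 1) A`,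
so `C_v(2k; S_n) = (n - 1)^{k-1} deg_S v` exactly. It remains to see that the degree vector of a
tree is weakly majorized by that of the star: the degrees of a tree sum to `2(n - 1)` and are all
positive, so any `m` vertices have total degree at most `n - 2 + m`, which is the total degree of
`m` vertices of the star one of which is the centre.
-/

open Finset Matrix

namespace WeaklyMajorizedBy

variable {n : ℕ} {x x' y : Fin n → ℝ}

lemma mono_left (hx : x ≤ x') (h : WeaklyMajorizedBy x' y) : WeaklyMajorizedBy x y := fun s ↦ by
  obtain ⟨t, hts, hle⟩ := h s
  exact ⟨t, hts, (sum_le_sum fun i _ ↦ hx i).trans hle⟩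

lemma const_smul {c : ℝ} (hc : 0 ≤ c) (h : WeaklyMajorizedBy x y) :
    WeaklyMajorizedBy (c • x) (c • y) := fun s ↦ by
  obtain ⟨t, hts, hle⟩ := h s
  refine ⟨t, hts, ?_⟩
  simpa only [Pi.smul_apply, smul_eq_mul, ← mul_sum] using mul_le_mul_of_nonneg_left hle hc

lemma sum_le (h : WeaklyMajorizedBy x y) : ∑ i, x i ≤ ∑ i, y i := by
  obtain ⟨t, hts, hle⟩ := h univ
  rwa [eq_univ_of_card t (hts.trans card_univ)] at hle

end WeaklyMajorizedBy

lemma pow_two_mul_succ_eq_of_pow_three_eq {S R : Type*} [CommSemiring S] [Semiring R] [Algebra S R]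
    {a : R} {c : S} (h : a ^ 3 = c • a) (k : ℕ) : a ^ (2 * (k + 1)) = c ^ k • a ^ 2 := by
  induction k with
  | zero => simp
  | succ k ih =>
    calc a ^ (2 * (k + 2)) = a ^ (2 * (k + 1)) * a ^ 2 := by rw [← pow_add]; ring_nf
      _ = c ^ k • (a ^ 3 * a) := by rw [ih, smul_mul_assoc, ← pow_add, ← pow_succ]
      _ = c ^ (k + 1) • a ^ 2 := by rw [h, smul_mul_assoc, smul_smul, ← pow_succ, sq]

namespace SimpleGraph

variable {V : Type*} [Fintype V] (G : SimpleGraph V) [DecidableRel G.Adj]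

lemma natCard_walk_length_eq_adjMatrix_pow_apply [DecidableEq V] {R : Type*} [Semiring R]
    (m : ℕ) (u v : V) :
    (Nat.card {p : G.Walk u v // p.length = m} : R) = (G.adjMatrix R ^ m) u v := by
  rw [adjMatrix_pow_apply_eq_card_walk, ← Nat.card_eq_fintype_card]
  rfl

lemma sum_degree_neighborFinset_le_card_edgeFinset [DecidableEq V] (hG : G.CliqueFree 3) (u : V) :
    ∑ v ∈ G.neighborFinset u, G.degree v ≤ #G.edgeFinset := by
  simp_rw [← card_incidenceFinset_eq_degree]
  rw [← card_biUnion]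
  · exact card_le_card (biUnion_subset.2 fun v _ ↦ G.incidenceFinset_subset v)
  · intro x hx y hy hxy
    have hnadj : ¬G.Adj x y := fun h ↦
      hG {u, x, y} (is3Clique_triple_iff.2 ⟨(G.mem_neighborFinset u x).1 hx,
        (G.mem_neighborFinset u y).1 hy, h⟩)
    change Disjoint (G.incidenceFinset x) (G.incidenceFinset y)
    rw [← disjoint_coe, coe_incidenceFinset, coe_incidenceFinset, Set.disjoint_iff_inter_eq_empty]
    exact G.incidenceSet_inter_incidenceSet_of_not_adj hnadj hxy

variable {G}

lemma sum_sq_adjMatrix_mulVec_le {K : ℕ} (hK : ∀ u, ∑ v ∈ G.neighborFinset u, G.degree v ≤ K)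
    (x : V → ℝ) : ∑ v, (G.adjMatrix ℝ *ᵥ x) v ^ 2 ≤ K * ∑ v, x v ^ 2 := by
  calc ∑ v, (G.adjMatrix ℝ *ᵥ x) v ^ 2
      ≤ ∑ v, ∑ u ∈ G.neighborFinset v, (G.degree v : ℝ) * x u ^ 2 := by
        gcongr with v
        rw [adjMatrix_mulVec_apply, ← mul_sum, ← card_neighborFinset_eq_degree]
        exact sq_sum_le_card_mul_sum_sq
    _ = ∑ u, ∑ v ∈ G.neighborFinset u, (G.degree v : ℝ) * x u ^ 2 :=
        sum_comm' fun v u ↦ by simp [adj_comm]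
    _ = ∑ u, x u ^ 2 * ∑ v ∈ G.neighborFinset u, (G.degree v : ℝ) := by
        simp_rw [← sum_mul, mul_comm]
    _ ≤ ∑ u, x u ^ 2 * K := by
        gcongr with u
        exact_mod_cast hK u
    _ = K * ∑ v, x v ^ 2 := by rw [← sum_mul, mul_comm]

variable [DecidableEq V]

lemma adjMatrix_pow_two_mul_apply_self (k : ℕ) (v : V) :
    (G.adjMatrix ℝ ^ (2 * k)) v v = ∑ u, (G.adjMatrix ℝ ^ k) u v ^ 2 := by
  rw [two_mul, pow_add, mul_apply]
  simp_rw [(G.isSymm_adjMatrix.pow k).apply v, sq]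

lemma sum_sq_adjMatrix_pow_apply_le {K : ℕ} (hK : ∀ u, ∑ v ∈ G.neighborFinset u, G.degree v ≤ K)
    (k : ℕ) (v : V) : ∑ u, (G.adjMatrix ℝ ^ (k + 1)) u v ^ 2 ≤ K ^ k * G.degree v := by
  induction k with
  | zero =>
    rw [← adjMatrix_pow_two_mul_apply_self, zero_add, mul_one, sq, adjMatrix_mul_self_apply_self,
      pow_zero, one_mul]
  | succ k ih =>
    have hcol : ∀ u, (G.adjMatrix ℝ ^ (k + 2)) u v =
        (G.adjMatrix ℝ *ᵥ fun w ↦ (G.adjMatrix ℝ ^ (k + 1)) w v) u := fun u ↦ by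
      rw [pow_succ' _ (k + 1), mul_apply]
      rfl
    calc ∑ u, (G.adjMatrix ℝ ^ (k + 2)) u v ^ 2
        = ∑ u, (G.adjMatrix ℝ *ᵥ fun w ↦ (G.adjMatrix ℝ ^ (k + 1)) w v) u ^ 2 := by
          simp_rw [hcol]
      _ ≤ K * ∑ u, (G.adjMatrix ℝ ^ (k + 1)) u v ^ 2 := sum_sq_adjMatrix_mulVec_le hK _
      _ ≤ K * (K ^ k * G.degree v) := by gcongr
      _ = K ^ (k + 1) * G.degree v := by ring

lemma adjMatrix_pow_two_mul_succ_apply_self_le {K : ℕ}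
    (hK : ∀ u, ∑ v ∈ G.neighborFinset u, G.degree v ≤ K) (k : ℕ) (v : V) :
    (G.adjMatrix ℝ ^ (2 * (k + 1))) v v ≤ K ^ k * G.degree v := by
  rw [adjMatrix_pow_two_mul_apply_self]
  exact sum_sq_adjMatrix_pow_apply_le hK k v

lemma IsTree.sum_degree_add_two_le [Nontrivial V] (hG : G.IsTree) (s : Finset V) :
    ∑ v ∈ s, G.degree v + 2 ≤ Fintype.card V + #s := by
  have hsum := G.sum_degrees_eq_twice_card_edges
  have hedges := hG.card_edgeFinset
  have hcompl : #sᶜ ≤ ∑ v ∈ sᶜ, G.degree v := by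
    rw [card_eq_sum_ones]
    exact sum_le_sum fun v _ ↦ hG.connected.preconnected.degree_pos_of_nontrivial v
  rw [← sum_add_sum_compl s] at hsum
  have := card_compl_add_card s
  omega

end SimpleGraph

section Star

variable {n : ℕ} [NeZero n]

lemma starGraph_adj {a b : Fin n} : (starGraph n).Adj a b ↔ a ≠ b ∧ (a = 0 ∨ b = 0) := by
  simp [starGraph]

variable [DecidableRel (starGraph n).Adj]

lemma starGraph_degree_zero : (starGraph n).degree 0 = n - 1 := by
  rw [← SimpleGraph.card_neighborFinset_eq_degree,
    show (starGraph n).neighborFinset 0 = univ.erase 0 by ext; simp [starGraph_adj, eq_comm],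
    card_erase_of_mem (mem_univ _), card_fin]

lemma starGraph_degree_of_ne_zero {v : Fin n} (hv : v ≠ 0) : (starGraph n).degree v = 1 := by
  rw [← SimpleGraph.card_neighborFinset_eq_degree, card_eq_one]
  refine ⟨0, ?_⟩
  ext w
  by_cases hw : w = 0 <;> simp [starGraph_adj, hv, hw]

lemma starGraph_sum_degree_add_two {t : Finset (Fin n)} (ht : 0 ∈ t) :
    ∑ v ∈ t, (starGraph n).degree v + 2 = n + #t := by
  rw [← add_sum_erase t _ ht, starGraph_degree_zero,
    sum_congr rfl fun v hv ↦ starGraph_degree_of_ne_zero (ne_of_mem_erase hv), sum_const,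
    smul_eq_mul, mul_one, card_erase_of_mem ht]
  have := card_pos.2 ⟨0, ht⟩
  have := NeZero.pos n
  omega

lemma starGraph_adjMatrix_eq :
    (starGraph n).adjMatrix ℝ = vecMulVec (Pi.single 0 1) (1 - Pi.single 0 1) +
      vecMulVec (1 - Pi.single 0 1) (Pi.single 0 1) := by
  ext i j
  by_cases hi : i = 0 <;> by_cases hj : j = 0 <;>
    simp [SimpleGraph.adjMatrix_apply, starGraph_adj, vecMulVec_apply, hi, hj, eq_comm]

lemma starGraph_adjMatrix_pow_three :
    (starGraph n).adjMatrix ℝ ^ 3 = ((n : ℝ) - 1) • (starGraph n).adjMatrix ℝ := by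
  rw [starGraph_adjMatrix_eq, pow_three]
  set e : Fin n → ℝ := Pi.single 0 1
  have hee : e ⬝ᵥ e = 1 := by simp [e]
  have hew : e ⬝ᵥ (1 - e) = 0 := by simp [e, dotProduct_sub]
  have hwe : (1 - e) ⬝ᵥ e = 0 := by simp [e]
  have hww : (1 - e) ⬝ᵥ (1 - e) = (n : ℝ) - 1 := by simp [e, sub_dotProduct, dotProduct_sub]
  simp only [add_mul, mul_add, vecMulVec_mul_vecMulVec, Matrix.mul_smul, hee, hew, hwe, hww,
    zero_smul, one_smul, vecMulVec_smul, vecMulVec_zero, smul_zero, smul_add, add_zero, zero_add]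

lemma starGraph_adjMatrix_pow_two_mul_succ_apply_self (k : ℕ) (v : Fin n) :
    ((starGraph n).adjMatrix ℝ ^ (2 * (k + 1))) v v =
      ((n : ℝ) - 1) ^ k * (starGraph n).degree v := by
  rw [pow_two_mul_succ_eq_of_pow_three_eq starGraph_adjMatrix_pow_three, Matrix.smul_apply, sq,
    SimpleGraph.adjMatrix_mul_self_apply_self, smul_eq_mul]

end Star

lemma SimpleGraph.IsTree.degree_weaklyMajorizedBy_starGraph {n : ℕ} (hn : 2 ≤ n)
    {T : SimpleGraph (Fin n)} [DecidableRel T.Adj] [DecidableRel (_root_.starGraph n).Adj]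
    (hT : T.IsTree) :
    WeaklyMajorizedBy (fun v ↦ (T.degree v : ℝ)) (fun v ↦ ((_root_.starGraph n).degree v : ℝ)) := by
  have : NeZero n := NeZero.of_pos (by omega)
  have : Nontrivial (Fin n) := Fin.nontrivial_iff_two_le.2 hn
  intro s
  rcases s.eq_empty_or_nonempty with rfl | ⟨r, hr⟩
  · exact ⟨∅, rfl, by simp⟩
  -- swapping `r` with the centre gives a set of the same size containing the centre
  set t := s.map (Equiv.swap r 0).toEmbedding
  have hT := hT.sum_degree_add_two_le s
  have hstar := starGraph_sum_degree_add_two (t := t) (mem_map.2 ⟨r, hr, by simp⟩)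
  have hts : #t = #s := card_map _
  rw [Fintype.card_fin] at hT
  refine ⟨t, hts, ?_⟩
  dsimp only
  exact_mod_cast (by omega : ∑ v ∈ s, T.degree v ≤ ∑ v ∈ t, (_root_.starGraph n).degree v)

/-- For any tree `T` on `n ≥ 2` vertices, the vector of numbers of closed walks of length `2k`
starting at each vertex is weakly majorized by the corresponding vector for the star `S_n`;
in particular the total number of closed walks of length `2k` in `T` is at most that in `S_n`. -/
theorem stmt_5 {n : ℕ} (hn : 2 ≤ n) (T : SimpleGraph (Fin n)) (hT : T.IsTree)
    (k : ℕ) (hk : 0 < k) :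
    WeaklyMajorizedBy
        (fun v => (Nat.card {p : T.Walk v v // p.length = 2 * k} : ℝ))
        (fun v => (Nat.card {p : (starGraph n).Walk v v // p.length = 2 * k} : ℝ)) ∧
      ∑ v : Fin n, Nat.card {p : T.Walk v v // p.length = 2 * k}
        ≤ ∑ v : Fin n, Nat.card {p : (starGraph n).Walk v v // p.length = 2 * k} := by
  classical
  have : NeZero n := NeZero.of_pos (by omega)
  obtain ⟨k, rfl⟩ := Nat.exists_eq_add_one_of_ne_zero hk.ne'
  have hK : ∀ u, ∑ v ∈ T.neighborFinset u, T.degree v ≤ n - 1 := fun u ↦ by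
    have := T.sum_degree_neighborFinset_le_card_edgeFinset (hT.isAcyclic.cliqueFree le_rfl) u
    have := hT.card_edgeFinset
    rw [Fintype.card_fin] at this
    omega
  have hcast : ((n - 1 : ℕ) : ℝ) = n - 1 := Nat.cast_pred (by omega)
  have hmaj : WeaklyMajorizedBy
      (fun v => (Nat.card {p : T.Walk v v // p.length = 2 * (k + 1)} : ℝ))
      (fun v => (Nat.card {p : (starGraph n).Walk v v // p.length = 2 * (k + 1)} : ℝ)) := by
    simp only [SimpleGraph.natCard_walk_length_eq_adjMatrix_pow_apply,
      starGraph_adjMatrix_pow_two_mul_succ_apply_self]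
    refine ((hT.degree_weaklyMajorizedBy_starGraph hn).const_smul
      (pow_nonneg (by linarith) k)).mono_left fun v ↦ ?_
    simpa [hcast] using SimpleGraph.adjMatrix_pow_two_mul_succ_apply_self_le hK k v
  exact ⟨hmaj, by exact_mod_cast hmaj.sum_le⟩
end

section
/- Suppose (x_1,...,x_p) is weakly majorized by (y_1,...,y_p) with y nonincreasing, and (x'_1,...,x'_p) is weakly majorized by (y'_1,...,y'_p) with y' nonincreasing, and all entries are nonnegative. Then for every 1 ≤ m ≤ p, Σ_{j=1}^m x_j x'_j ≤ Σ_{j=1}^m y_j y'_j, provided x and x' are also nonincreasing. -/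
open Finset

/-- A strictly monotone map of `Fin`s satisfies `i ≤ f i` (on values). -/
lemma strictMono_fin_le {k p : ℕ} (f : Fin k → Fin p) (hf : StrictMono f) :
    ∀ i : Fin k, (i : ℕ) ≤ (f i : ℕ) := by
  intro ⟨i, hi⟩
  induction i with
  | zero => exact Nat.zero_le _
  | succ n ih =>
      have hn : n < k := Nat.lt_of_succ_lt hi
      have h1 : (⟨n, hn⟩ : Fin k) < ⟨n + 1, hi⟩ := by simp [Fin.lt_def]
      have h2 : ((f ⟨n, hn⟩ : Fin p) : ℕ) < ((f ⟨n + 1, hi⟩ : Fin p) : ℕ) := hf h1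
      have h3 := ih hn
      simp only [Fin.val_mk] at h3 ⊢
      omega

/-- The prefix set as a map of `univ : Finset (Fin k)`. -/
lemma prefix_eq_map {p k : ℕ} (hk : k ≤ p) :
    Finset.univ.filter (fun j : Fin p => (j : ℕ) < k)
      = Finset.map (Fin.castLEOrderEmb hk).toEmbedding Finset.univ := by
  ext j
  simp only [mem_filter, mem_univ, true_and, mem_map]
  constructor
  · intro hj
    exact ⟨⟨(j : ℕ), hj⟩, by ext; rfl⟩
  · rintro ⟨i, rfl⟩
    exact i.2

/-- Sum over any finset is dominated by sum over the prefix of the same size, for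
antitone nonnegative functions. -/
lemma sum_le_prefix {p : ℕ} (y : Fin p → ℝ) (hy : Antitone y)
    (t : Finset (Fin p)) {k : ℕ} (ht : t.card = k) (hk : k ≤ p) :
    ∑ i ∈ t, y i ≤ ∑ j ∈ Finset.univ.filter (fun j : Fin p => (j : ℕ) < k), y j := by
  have htmap : t = Finset.map (t.orderEmbOfFin ht).toEmbedding Finset.univ := by
    ext j
    simp only [mem_map, mem_univ, true_and, RelEmbedding.coe_toEmbedding]
    constructor
    · intro hj
      have : j ∈ Set.range (t.orderEmbOfFin ht) := by
        rw [Finset.range_orderEmbOfFin]; exact hj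
      obtain ⟨i, hi⟩ := this
      exact ⟨i, hi⟩
    · rintro ⟨i, rfl⟩
      exact Finset.orderEmbOfFin_mem t ht i
  rw [htmap, prefix_eq_map hk, Finset.sum_map, Finset.sum_map]
  apply Finset.sum_le_sum
  intro i _
  apply hy
  have := strictMono_fin_le _ (t.orderEmbOfFin ht).strictMono i
  simp only [Fin.le_def, RelEmbedding.coe_toEmbedding, Fin.castLEOrderEmb_apply,
    Fin.coe_castLE]
  exact this

/-- Prefix-sum dominance from weak majorization. -/
lemma prefix_dom {p : ℕ} (x y : Fin p → ℝ) (hy : Antitone y)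
    (h : WeaklyMajorizedBy x y) {k : ℕ} (hk : k ≤ p) :
    ∑ j ∈ Finset.univ.filter (fun j : Fin p => (j : ℕ) < k), x j
      ≤ ∑ j ∈ Finset.univ.filter (fun j : Fin p => (j : ℕ) < k), y j := by
  obtain ⟨t, htc, hts⟩ := h (Finset.univ.filter (fun j : Fin p => (j : ℕ) < k))
  have hcard : (Finset.univ.filter (fun j : Fin p => (j : ℕ) < k)).card = k := by
    rw [prefix_eq_map hk, Finset.card_map, Finset.card_univ, Fintype.card_fin]
  refine hts.trans (sum_le_prefix y hy t (by rw [htc, hcard]) hk)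

/-- Abel summation identity for prefix sums. -/
lemma abel_identity (a w : ℕ → ℝ) (m : ℕ) :
    ∑ j ∈ Finset.range m, w j * a j
      = (∑ k ∈ Finset.range m, (w k - w (k + 1)) * (∑ j ∈ Finset.range (k + 1), a j))
        + w m * (∑ j ∈ Finset.range m, a j) := by
  induction m with
  | zero => simp
  | succ n ih =>
      rw [Finset.sum_range_succ, ih, Finset.sum_range_succ (fun k =>
        (w k - w (k + 1)) * (∑ j ∈ Finset.range (k + 1), a j)),
        Finset.sum_range_succ a]
      ring

/-- Weighted comparison via Abel summation. -/
lemma abel_le (a b w : ℕ → ℝ) (m : ℕ) (hw : Antitone w) (hw0 : ∀ k, 0 ≤ w k)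
    (hab : ∀ k, k ≤ m → ∑ j ∈ Finset.range k, a j ≤ ∑ j ∈ Finset.range k, b j) :
    ∑ j ∈ Finset.range m, w j * a j ≤ ∑ j ∈ Finset.range m, w j * b j := by
  rw [abel_identity a w m, abel_identity b w m]
  apply add_le_add
  · apply Finset.sum_le_sum
    intro k hk
    exact mul_le_mul_of_nonneg_left (hab (k + 1) (Finset.mem_range.mp hk))
      (sub_nonneg.mpr (hw (Nat.le_succ k)))
  · exact mul_le_mul_of_nonneg_left (hab m le_rfl) (hw0 m)

/-- Converting the `Fin p` prefix sum to a `range` sum of the zero-extension. -/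
lemma filter_sum_eq {p m : ℕ} (hm : m ≤ p) (f : Fin p → ℝ) :
    ∑ j ∈ Finset.univ.filter (fun j : Fin p => (j : ℕ) < m), f j
      = ∑ k ∈ Finset.range m, (fun k => if h : k < p then f ⟨k, h⟩ else 0) k := by
  rw [prefix_eq_map hm, Finset.sum_map, ← Fin.sum_univ_eq_sum_range]
  apply Finset.sum_congr rfl
  intro i _
  have hi : (i : ℕ) < p := lt_of_lt_of_le i.2 hm
  simp only [dif_pos hi, RelEmbedding.coe_toEmbedding, Fin.castLEOrderEmb_apply]
  congr

/-- Product-summation inequality: if nonnegative nonincreasing `x, x'` are weakly majorized by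
nonnegative nonincreasing `y, y'` respectively, then all initial partial sums of the
entrywise products satisfy `∑_{j<m} x_j x'_j ≤ ∑_{j<m} y_j y'_j`. -/
theorem stmt_14 {p : ℕ} (x x' y y' : Fin p → ℝ)
    (hx0 : ∀ i, 0 ≤ x i) (hx'0 : ∀ i, 0 ≤ x' i)
    (hy0 : ∀ i, 0 ≤ y i) (hy'0 : ∀ i, 0 ≤ y' i)
    (hx : Antitone x) (hx' : Antitone x') (hy : Antitone y) (hy' : Antitone y')
    (h1 : WeaklyMajorizedBy x y) (h2 : WeaklyMajorizedBy x' y') :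
    ∀ m : ℕ, 1 ≤ m → m ≤ p →
      ∑ j ∈ Finset.univ.filter (fun j : Fin p => (j : ℕ) < m), x j * x' j
        ≤ ∑ j ∈ Finset.univ.filter (fun j : Fin p => (j : ℕ) < m), y j * y' j := by
  intro m hm1 hmp
  -- zero extensions to ℕ
  set X : ℕ → ℝ := fun k => if h : k < p then x ⟨k, h⟩ else 0 with hX
  set X' : ℕ → ℝ := fun k => if h : k < p then x' ⟨k, h⟩ else 0 with hX'
  set Y : ℕ → ℝ := fun k => if h : k < p then y ⟨k, h⟩ else 0 with hY
  set Y' : ℕ → ℝ := fun k => if h : k < p then y' ⟨k, h⟩ else 0 with hY'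
  have ext_anti : ∀ (f : Fin p → ℝ), (∀ i, 0 ≤ f i) → Antitone f →
      Antitone (fun k => if h : k < p then f ⟨k, h⟩ else 0) := by
    intro f hf0 hf a b hab
    dsimp only
    by_cases hb : b < p
    · have ha : a < p := lt_of_le_of_lt hab hb
      simp only [dif_pos ha, dif_pos hb]
      exact hf (by simpa [Fin.le_def] using hab)
    · by_cases ha : a < p
      · simp only [dif_pos ha, dif_neg hb]; exact hf0 _
      · simp [dif_neg ha, dif_neg hb]
  have ext_nonneg : ∀ (f : Fin p → ℝ), (∀ i, 0 ≤ f i) →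
      ∀ k, 0 ≤ (fun k => if h : k < p then f ⟨k, h⟩ else 0) k := by
    intro f hf0 k
    dsimp only
    split <;> simp [hf0]
  -- prefix dominance in ℕ form
  have domX : ∀ k, k ≤ m → ∑ j ∈ Finset.range k, X j ≤ ∑ j ∈ Finset.range k, Y j := by
    intro k hk
    rw [← filter_sum_eq (hk.trans hmp) x, ← filter_sum_eq (hk.trans hmp) y]
    exact prefix_dom x y hy h1 (hk.trans hmp)
  have domX' : ∀ k, k ≤ m → ∑ j ∈ Finset.range k, X' j ≤ ∑ j ∈ Finset.range k, Y' j := by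
    intro k hk
    rw [← filter_sum_eq (hk.trans hmp) x', ← filter_sum_eq (hk.trans hmp) y']
    exact prefix_dom x' y' hy' h2 (hk.trans hmp)
  have step1 : ∑ j ∈ Finset.range m, X' j * X j ≤ ∑ j ∈ Finset.range m, X' j * Y j :=
    abel_le X Y X' m (ext_anti x' hx'0 hx') (ext_nonneg x' hx'0) domX
  have step2 : ∑ j ∈ Finset.range m, Y j * X' j ≤ ∑ j ∈ Finset.range m, Y j * Y' j :=
    abel_le X' Y' Y m (ext_anti y hy0 hy) (ext_nonneg y hy0) domX'
  have key : ∑ j ∈ Finset.range m, X j * X' j ≤ ∑ j ∈ Finset.range m, Y j * Y' j := by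
    calc ∑ j ∈ Finset.range m, X j * X' j = ∑ j ∈ Finset.range m, X' j * X j := by
          simp_rw [mul_comm]
      _ ≤ ∑ j ∈ Finset.range m, X' j * Y j := step1
      _ = ∑ j ∈ Finset.range m, Y j * X' j := by simp_rw [mul_comm]
      _ ≤ ∑ j ∈ Finset.range m, Y j * Y' j := step2
  rw [filter_sum_eq hmp (fun j => x j * x' j), filter_sum_eq hmp (fun j => y j * y' j)]
  have hxx : ∀ k ∈ Finset.range m,
      (fun k => if h : k < p then x ⟨k, h⟩ * x' ⟨k, h⟩ else 0) k = X k * X' k := by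
    intro k hk
    have : k < p := lt_of_lt_of_le (Finset.mem_range.mp hk) hmp
    simp [hX, hX', this]
  have hyy : ∀ k ∈ Finset.range m,
      (fun k => if h : k < p then y ⟨k, h⟩ * y' ⟨k, h⟩ else 0) k = Y k * Y' k := by
    intro k hk
    have : k < p := lt_of_lt_of_le (Finset.mem_range.mp hk) hmp
    simp [hY, hY', this]
  rw [Finset.sum_congr rfl hxx, Finset.sum_congr rfl hyy]
  exact key
end
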